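/- Suppose P^wf = (P₁^wf, P₂^wf) is a feasible power policy such that, for each k = 1,2, Pₖ^wf maximizes ∫ C(g_{kk}Pₖ) dμ among all measurable Pₖ ≥ 0 with ∫ Pₖ dμ ≤ P̄ₖ, and suppose the ergodic very strong condition holds at P^wf: ∫ C(g₁₁P₁^wf) dμ + ∫ C(g₂₂P₂^wf) dμ < min over j = 1,2 of ∫ C(g_{j1}P₁^wf + g_{j2}P₂^wf) dμ. Then ⋃_{P feasible} ( C₁(P) ∩ C₂(P) ) = {(R₁,R₂) ∈ [0,∞)² : Rₖ ≤ ∫ C(g_{kk}Pₖ^wf) dμ for k = 1,2}; in particular the maximum of R₁ + R₂ over this union equals ∫ C(g₁₁P₁^wf) dμ + ∫ C(g₂₂P₂^wf) dμ. -/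
import Mathlib


open MeasureTheory

/-- A power policy `P = (P₁, P₂)` is feasible for average power constraints
`P̄₁, P̄₂` if its components are measurable, nonnegative, integrable, and satisfy
`∫ Pₖ dμ ≤ P̄ₖ` for `k = 1, 2`. -/
def Feasible {Ω : Type*} [MeasurableSpace Ω] (μ : Measure Ω) (Pb1 Pb2 : ℝ)
    (P : (Ω → ℝ) × (Ω → ℝ)) : Prop :=
  Measurable P.1 ∧ Measurable P.2 ∧ (∀ ω, 0 ≤ P.1 ω) ∧ (∀ ω, 0 ≤ P.2 ω) ∧
    Integrable P.1 μ ∧ Integrable P.2 μ ∧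
    ∫ ω, P.1 ω ∂μ ≤ Pb1 ∧ ∫ ω, P.2 ω ∂μ ≤ Pb2

/-- The fading-averaged MAC rate region at a receiver with (squared) fading gains
`ga` from transmitter 1 and `gb` from transmitter 2 under power policy `(P₁, P₂)`,
with `C(x) = log(1+x)`. -/
def macRegion {Ω : Type*} [MeasurableSpace Ω] (μ : Measure Ω)
    (ga gb P1 P2 : Ω → ℝ) : Set (ℝ × ℝ) :=
  {R | 0 ≤ R.1 ∧ 0 ≤ R.2 ∧
    R.1 ≤ ∫ ω, Real.log (1 + ga ω * P1 ω) ∂μ ∧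
    R.2 ≤ ∫ ω, Real.log (1 + gb ω * P2 ω) ∂μ ∧
    R.1 + R.2 ≤ ∫ ω, Real.log (1 + ga ω * P1 ω + gb ω * P2 ω) ∂μ}

lemma log_one_add_add_le (a b : ℝ) (ha : 0 ≤ a) (hb : 0 ≤ b) :
    Real.log (1 + a + b) ≤ Real.log (1 + a) + Real.log (1 + b) := by
  rw [← Real.log_mul (by positivity) (by positivity)]
  exact Real.log_le_log (by positivity) (by nlinarith)

lemma integrable_log_of_le {Ω : Type*} [MeasurableSpace Ω] {μ : Measure Ω} {f h : Ω → ℝ}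
    (hf : Measurable f) (hf0 : ∀ ω, 0 ≤ f ω) (hle : ∀ ω, f ω ≤ h ω)
    (hh : Integrable h μ) : Integrable f μ :=
  hh.mono hf.aestronglyMeasurable (Filter.Eventually.of_forall fun ω => by
    simp only [Real.norm_eq_abs]
    rw [abs_of_nonneg (hf0 ω)]; exact (hle ω).trans (le_abs_self _))

set_option maxHeartbeats 1000000 in
/-- If `P^wf = (P₁^wf, P₂^wf)` is a feasible policy whose components
maximize the interference-free ergodic rates `∫ C(g_{kk}Pₖ)` and the ergodic very
strong condition holds at `P^wf`, then the compound-MAC capacity region (the union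
over feasible policies of the intersections of the two MAC regions) equals the
rectangle `{(R₁,R₂) ∈ [0,∞)² : Rₖ ≤ ∫ C(g_{kk}Pₖ^wf)}`; in particular the maximum
of `R₁ + R₂` over this union equals `∫ C(g₁₁P₁^wf) + ∫ C(g₂₂P₂^wf)`. -/
theorem stmt6 {Ω : Type*} [MeasurableSpace Ω] (μ : Measure Ω) [IsProbabilityMeasure μ]
    (g11 g12 g21 g22 : Ω → ℝ)
    (hm11 : Measurable g11) (hm12 : Measurable g12)
    (hm21 : Measurable g21) (hm22 : Measurable g22)
    (hn11 : ∀ ω, 0 ≤ g11 ω) (hn12 : ∀ ω, 0 ≤ g12 ω)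
    (hn21 : ∀ ω, 0 ≤ g21 ω) (hn22 : ∀ ω, 0 ≤ g22 ω)
    (Pb1 Pb2 : ℝ) (hPb1 : 0 < Pb1) (hPb2 : 0 < Pb2)
    (hint : ∀ P : (Ω → ℝ) × (Ω → ℝ), Feasible μ Pb1 Pb2 P →
      Integrable (fun ω => Real.log (1 + g11 ω * P.1 ω + g12 ω * P.2 ω)) μ ∧
      Integrable (fun ω => Real.log (1 + g21 ω * P.1 ω + g22 ω * P.2 ω)) μ)
    (P1wf P2wf : Ω → ℝ)
    (hwfFeas : Feasible μ Pb1 Pb2 (P1wf, P2wf))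
    (hi1 : Integrable (fun ω => Real.log (1 + g11 ω * P1wf ω)) μ)
    (hi2 : Integrable (fun ω => Real.log (1 + g22 ω * P2wf ω)) μ)
    (hmax1 : ∀ P1 : Ω → ℝ, Measurable P1 → (∀ ω, 0 ≤ P1 ω) → Integrable P1 μ →
      ∫ ω, P1 ω ∂μ ≤ Pb1 →
      Integrable (fun ω => Real.log (1 + g11 ω * P1 ω)) μ →
      ∫ ω, Real.log (1 + g11 ω * P1 ω) ∂μ ≤ ∫ ω, Real.log (1 + g11 ω * P1wf ω) ∂μ)
    (hmax2 : ∀ P2 : Ω → ℝ, Measurable P2 → (∀ ω, 0 ≤ P2 ω) → Integrable P2 μ →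
      ∫ ω, P2 ω ∂μ ≤ Pb2 →
      Integrable (fun ω => Real.log (1 + g22 ω * P2 ω)) μ →
      ∫ ω, Real.log (1 + g22 ω * P2 ω) ∂μ ≤ ∫ ω, Real.log (1 + g22 ω * P2wf ω) ∂μ)
    (hEVS1 : ∫ ω, Real.log (1 + g11 ω * P1wf ω) ∂μ + ∫ ω, Real.log (1 + g22 ω * P2wf ω) ∂μ <
      ∫ ω, Real.log (1 + g11 ω * P1wf ω + g12 ω * P2wf ω) ∂μ)
    (hEVS2 : ∫ ω, Real.log (1 + g11 ω * P1wf ω) ∂μ + ∫ ω, Real.log (1 + g22 ω * P2wf ω) ∂μ <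
      ∫ ω, Real.log (1 + g21 ω * P1wf ω + g22 ω * P2wf ω) ∂μ) :
    (⋃ P ∈ {P : (Ω → ℝ) × (Ω → ℝ) | Feasible μ Pb1 Pb2 P},
        macRegion μ g11 g12 P.1 P.2 ∩ macRegion μ g21 g22 P.1 P.2) =
      {R : ℝ × ℝ | 0 ≤ R.1 ∧ 0 ≤ R.2 ∧
        R.1 ≤ ∫ ω, Real.log (1 + g11 ω * P1wf ω) ∂μ ∧
        R.2 ≤ ∫ ω, Real.log (1 + g22 ω * P2wf ω) ∂μ} ∧
    IsGreatest ((fun R : ℝ × ℝ => R.1 + R.2) ''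
        (⋃ P ∈ {P : (Ω → ℝ) × (Ω → ℝ) | Feasible μ Pb1 Pb2 P},
          macRegion μ g11 g12 P.1 P.2 ∩ macRegion μ g21 g22 P.1 P.2))
      (∫ ω, Real.log (1 + g11 ω * P1wf ω) ∂μ + ∫ ω, Real.log (1 + g22 ω * P2wf ω) ∂μ) := by

  obtain ⟨hmw1, hmw2, hw10, hw20, hwi1, hwi2, hwb1, hwb2⟩ := hwfFeas
  have hwfFeas' : Feasible μ Pb1 Pb2 (P1wf, P2wf) :=
    ⟨hmw1, hmw2, hw10, hw20, hwi1, hwi2, hwb1, hwb2⟩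
  set A := ∫ ω, Real.log (1 + g11 ω * P1wf ω) ∂μ with hA
  set B := ∫ ω, Real.log (1 + g22 ω * P2wf ω) ∂μ with hB
  obtain ⟨Iw1, Iw2⟩ := hint (P1wf, P2wf) hwfFeas'
  have I12 : Integrable (fun ω => Real.log (1 + g12 ω * P2wf ω)) μ := by
    refine integrable_log_of_le ((measurable_const.add (hm12.mul hmw2)).log)
      (fun ω => Real.log_nonneg (by nlinarith [mul_nonneg (hn12 ω) (hw20 ω)]))
      (fun ω => Real.log_le_log (by nlinarith [mul_nonneg (hn12 ω) (hw20 ω)])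
        (by nlinarith [mul_nonneg (hn11 ω) (hw10 ω)])) Iw1
  have I21 : Integrable (fun ω => Real.log (1 + g21 ω * P1wf ω)) μ := by
    refine integrable_log_of_le ((measurable_const.add (hm21.mul hmw1)).log)
      (fun ω => Real.log_nonneg (by nlinarith [mul_nonneg (hn21 ω) (hw10 ω)]))
      (fun ω => Real.log_le_log (by nlinarith [mul_nonneg (hn21 ω) (hw10 ω)])
        (by nlinarith [mul_nonneg (hn22 ω) (hw20 ω)])) Iw2
  have hsplit1 : ∫ ω, Real.log (1 + g11 ω * P1wf ω + g12 ω * P2wf ω) ∂μ ≤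
      A + ∫ ω, Real.log (1 + g12 ω * P2wf ω) ∂μ := by
    rw [hA, ← integral_add hi1 I12]
    exact integral_mono Iw1 (hi1.add I12) fun ω =>
      log_one_add_add_le _ _ (mul_nonneg (hn11 ω) (hw10 ω)) (mul_nonneg (hn12 ω) (hw20 ω))
  have hsplit2 : ∫ ω, Real.log (1 + g21 ω * P1wf ω + g22 ω * P2wf ω) ∂μ ≤
      (∫ ω, Real.log (1 + g21 ω * P1wf ω) ∂μ) + B := by
    rw [hB, ← integral_add I21 hi2]
    exact integral_mono Iw2 (I21.add hi2) fun ω =>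
      log_one_add_add_le _ _ (mul_nonneg (hn21 ω) (hw10 ω)) (mul_nonneg (hn22 ω) (hw20 ω))
  have hB12 : B ≤ ∫ ω, Real.log (1 + g12 ω * P2wf ω) ∂μ := by linarith
  have hA21 : A ≤ ∫ ω, Real.log (1 + g21 ω * P1wf ω) ∂μ := by linarith
  have hseteq : (⋃ P ∈ {P : (Ω → ℝ) × (Ω → ℝ) | Feasible μ Pb1 Pb2 P},
        macRegion μ g11 g12 P.1 P.2 ∩ macRegion μ g21 g22 P.1 P.2) =
      {R : ℝ × ℝ | 0 ≤ R.1 ∧ 0 ≤ R.2 ∧ R.1 ≤ A ∧ R.2 ≤ B} := by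
    ext R
    simp only [Set.mem_iUnion, Set.mem_setOf_eq, Set.mem_inter_iff]
    constructor
    · rintro ⟨P, hP, ⟨hR10, hR20, hR1, _, _⟩, ⟨_, _, _, hR2', _⟩⟩
      obtain ⟨hm1, hm2, h10, h20, hi1', hi2', hb1, hb2⟩ := hP
      obtain ⟨J1, J2⟩ := hint P ⟨hm1, hm2, h10, h20, hi1', hi2', hb1, hb2⟩
      have I11 : Integrable (fun ω => Real.log (1 + g11 ω * P.1 ω)) μ := by
        refine integrable_log_of_le ((measurable_const.add (hm11.mul hm1)).log)
          (fun ω => Real.log_nonneg (by nlinarith [mul_nonneg (hn11 ω) (h10 ω)]))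
          (fun ω => Real.log_le_log (by nlinarith [mul_nonneg (hn11 ω) (h10 ω)])
            (by nlinarith [mul_nonneg (hn12 ω) (h20 ω)])) J1
      have I22 : Integrable (fun ω => Real.log (1 + g22 ω * P.2 ω)) μ := by
        refine integrable_log_of_le ((measurable_const.add (hm22.mul hm2)).log)
          (fun ω => Real.log_nonneg (by nlinarith [mul_nonneg (hn22 ω) (h20 ω)]))
          (fun ω => Real.log_le_log (by nlinarith [mul_nonneg (hn22 ω) (h20 ω)])
            (by nlinarith [mul_nonneg (hn21 ω) (h10 ω)])) J2
      exact ⟨hR10, hR20,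
        hR1.trans (hmax1 P.1 hm1 h10 hi1' hb1 I11),
        hR2'.trans (hmax2 P.2 hm2 h20 hi2' hb2 I22)⟩
    · rintro ⟨hR10, hR20, hR1, hR2⟩
      refine ⟨(P1wf, P2wf), hwfFeas', ⟨hR10, hR20, hR1, hR2.trans hB12, ?_⟩,
        ⟨hR10, hR20, hR1.trans hA21, hR2, ?_⟩⟩
      · exact le_of_lt (lt_of_le_of_lt (by linarith) hEVS1)
      · exact le_of_lt (lt_of_le_of_lt (by linarith) hEVS2)
  refine ⟨hseteq, ?_⟩
  rw [hseteq]
  constructor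
  · have hA0 : 0 ≤ A := integral_nonneg fun ω =>
      Real.log_nonneg (by nlinarith [mul_nonneg (hn11 ω) (hw10 ω)])
    have hB0 : 0 ≤ B := integral_nonneg fun ω =>
      Real.log_nonneg (by nlinarith [mul_nonneg (hn22 ω) (hw20 ω)])
    exact ⟨(A, B), ⟨hA0, hB0, le_refl _, le_refl _⟩, rfl⟩
  · rintro x ⟨R, ⟨_, _, hR1, hR2⟩, rfl⟩
    exact add_le_add hR1 hR2
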